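/- Let V be a finite-dimensional real vector space, η a linear functional on V, ρ an alternating bilinear form on V, K := {v ∈ ker η : ρ(v,w) = 0 for all w ∈ ker η}, P a linear projection of V onto K, and on Ṽ := V × K* let η̃(v,α) := η(v) and ρ̃((v,α),(w,β)) := ρ(v,w) − α(P w) + β(P v). Then the contact orthogonal of V × {0}, namely {(v,α) ∈ Ṽ : η(v) = 0 and ρ̃((v,α),(w,0)) = 0 for all w ∈ V}, equals (ker η ∩ rad ρ) × {0}; in particular it is contained in V × {0}, so V × {0} is a coisotropic subspace. -/
import Mathlib


/-- The radical of a bilinear form `ω` on `V`: vectors `v` with `ω v w = 0` for all `w`. -/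
def biRadical {V : Type*} [AddCommGroup V] [Module ℝ V]
    (ω : V →ₗ[ℝ] V →ₗ[ℝ] ℝ) : Submodule ℝ V where
  carrier := {v | ∀ w, ω v w = 0}
  add_mem' := by
    intro a b ha hb w
    simp only [Set.mem_setOf_eq] at ha hb
    simp [map_add, ha w, hb w]
  zero_mem' := by intro w; simp
  smul_mem' := by
    intro c a ha w
    simp only [Set.mem_setOf_eq] at ha
    simp [ha w]

/-- The radical of a bilinear form `ρ` relative to a subspace `D`:
vectors `v` with `ρ v w = 0` for all `w ∈ D`. -/
def relRadical {V : Type*} [AddCommGroup V] [Module ℝ V]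
    (ρ : V →ₗ[ℝ] V →ₗ[ℝ] ℝ) (D : Submodule ℝ V) : Submodule ℝ V where
  carrier := {v | ∀ w ∈ D, ρ v w = 0}
  add_mem' := by
    intro a b ha hb w hw
    simp only [Set.mem_setOf_eq] at ha hb
    simp [map_add, ha w hw, hb w hw]
  zero_mem' := by intro w _; simp
  smul_mem' := by
    intro c a ha w hw
    simp only [Set.mem_setOf_eq] at ha
    simp [ha w hw]

/-- The contact-type thickened form `ρ̃` on `Ṽ = V × K*`:
`ρ̃((v,α),(w,β)) = ρ(v,w) − α(P w) + β(P v)`. -/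
def thickC {V : Type*} [AddCommGroup V] [Module ℝ V]
    (ρ : V →ₗ[ℝ] V →ₗ[ℝ] ℝ) (K : Submodule ℝ V) (P : V →ₗ[ℝ] V)
    (hPK : ∀ v : V, P v ∈ K) :
    (V × Module.Dual ℝ K) → (V × Module.Dual ℝ K) → ℝ :=
  fun x y => ρ x.1 y.1 - x.2 ⟨P y.1, hPK y.1⟩ + y.2 ⟨P x.1, hPK x.1⟩

/-- For a pre-contact structure `(η, ρ)` with characteristic subspace
`K = {v ∈ ker η : ρ(v,w) = 0 ∀ w ∈ ker η}` and `P` a projection onto `K`, the contact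
orthogonal of `V × {0}` in `(Ṽ, η̃, ρ̃)` equals `(ker η ∩ rad ρ) × {0}`; in particular it
is contained in `V × {0}`, so `V × {0}` is coisotropic. -/
theorem contact_thickening_coisotropic
    (V : Type*) [AddCommGroup V] [Module ℝ V] [FiniteDimensional ℝ V]
    (η : V →ₗ[ℝ] ℝ)
    (ρ : V →ₗ[ℝ] V →ₗ[ℝ] ℝ) (halt : ∀ v, ρ v v = 0)
    (P : V →ₗ[ℝ] V) (hidem : P ∘ₗ P = P)
    (hPK : ∀ v : V, P v ∈ LinearMap.ker η ⊓ relRadical ρ (LinearMap.ker η))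
    (hrange : LinearMap.range P = LinearMap.ker η ⊓ relRadical ρ (LinearMap.ker η)) :
    ({x : V × Module.Dual ℝ ↥(LinearMap.ker η ⊓ relRadical ρ (LinearMap.ker η)) |
        η x.1 = 0 ∧
          ∀ w : V,
            thickC ρ (LinearMap.ker η ⊓ relRadical ρ (LinearMap.ker η)) P hPK x (w, 0) = 0}
      = {x : V × Module.Dual ℝ ↥(LinearMap.ker η ⊓ relRadical ρ (LinearMap.ker η)) |
          x.1 ∈ LinearMap.ker η ⊓ biRadical ρ ∧ x.2 = 0}) ∧
    ({x : V × Module.Dual ℝ ↥(LinearMap.ker η ⊓ relRadical ρ (LinearMap.ker η)) |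
        η x.1 = 0 ∧
          ∀ w : V,
            thickC ρ (LinearMap.ker η ⊓ relRadical ρ (LinearMap.ker η)) P hPK x (w, 0) = 0}
      ⊆ {x : V × Module.Dual ℝ ↥(LinearMap.ker η ⊓ relRadical ρ (LinearMap.ker η)) |
          x.2 = 0}) := by
  have hskew : ∀ v w, ρ v w = - ρ w v := by
    intro v w
    have h := halt (v + w)
    simp only [map_add, LinearMap.add_apply, halt v, halt w] at h
    linarith
  set K := LinearMap.ker η ⊓ relRadical ρ (LinearMap.ker η) with hK
  have hfix : ∀ w ∈ K, P w = w := by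
    intro w hw
    rw [← hrange] at hw
    obtain ⟨u, rfl⟩ := hw
    have := congrFun (congrArg DFunLike.coe hidem) u
    simpa using this
  have main : ∀ x : V × Module.Dual ℝ ↥K,
      (η x.1 = 0 ∧ ∀ w : V, thickC ρ K P hPK x (w, 0) = 0) ↔
      (x.1 ∈ LinearMap.ker η ⊓ biRadical ρ ∧ x.2 = 0) := by
    rintro ⟨v, α⟩
    constructor
    · rintro ⟨hv, hall⟩
      have key : ∀ w : V, ρ v w = α ⟨P w, hPK w⟩ := by
        intro w
        have := hall w
        simp only [thickC, LinearMap.zero_apply] at this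
        linarith [this]
      have hα : α = 0 := by
        ext w
        have hw := key w.1
        have hPw : P w.1 = w.1 := hfix w.1 w.2
        have hrad : ρ w.1 v = 0 :=
          (Submodule.mem_inf.mp w.2).2 v hv
        have : ρ v (w.1 : V) = 0 := by rw [hskew v w.1, hrad]; ring
        rw [this] at hw
        have : α ⟨P w.1, hPK w.1⟩ = α w := by congr 1; exact Subtype.ext hPw
        rw [this] at hw
        simp [← hw]
      refine ⟨Submodule.mem_inf.mpr ⟨hv, ?_⟩, hα⟩
      intro w
      have := key w
      rw [hα] at this
      simpa using this
    · rintro ⟨hv, rfl⟩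
      rw [Submodule.mem_inf] at hv
      refine ⟨hv.1, fun w => ?_⟩
      simp [thickC, hv.2 w]
  constructor
  · ext x
    exact main x
  · intro x hx
    exact ((main x).mp hx).2
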